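/- Let G be a distance-regular graph with degree k, such that adjacent vertices have exactly λ common neighbors and vertices at distance 2 have exactly μ common neighbors, and let s be the least eigenvalue of the real adjacency matrix of G. Suppose G contains no m-claw for any integer m > |s|, and suppose λ + 1 > (2|s| − 1)(μ − 1). Then G has a clique geometry all of whose members have order exactly 1 + k/|s| (i.e., G is Delsarte-geometric). -/

import Mathlib

open Finset

/-- A connected graph is *distance-regular* with intersection arrays `b`, `c` if, whenever
`u, v` are vertices at distance `i`, the vertex `v` has exactly `b i` neighbors at distance
`i + 1` from `u` and exactly `c i` neighbors at distance `i - 1` from `u`. -/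
def IsDistanceRegular {V : Type*} [Fintype V] [DecidableEq V] (G : SimpleGraph V)
    [DecidableRel G.Adj] (b c : ℕ → ℕ) : Prop :=
  G.Connected ∧
    ∀ u v : V, ∀ i : ℕ, G.dist u v = i →
      ((G.neighborFinset v).filter fun w => G.dist u w = i + 1).card = b i ∧
      ((G.neighborFinset v).filter fun w => G.dist u w = i - 1).card = c i

/-- `θ` is an eigenvalue of the real adjacency matrix of `G`. -/
def IsAdjEigenvalue {V : Type*} [Fintype V] [DecidableEq V] (G : SimpleGraph V)
    [DecidableRel G.Adj] (θ : ℝ) : Prop :=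
  ∃ x : V → ℝ, x ≠ 0 ∧ (G.adjMatrix ℝ).mulVec x = θ • x

/-- A clique (given as a finset) is a *maximal clique* if it is not properly contained in any
other clique. -/
def IsMaximalClique {V : Type*} (G : SimpleGraph V) (c : Finset V) : Prop :=
  G.IsClique (c : Set V) ∧ ∀ d : Finset V, G.IsClique (d : Set V) → c ⊆ d → c = d

/-- A *clique geometry* of `G` is a collection of cliques, all maximal, such that every pair of
adjacent vertices belongs to exactly one member of the collection. -/
def IsCliqueGeometry {V : Type*} (G : SimpleGraph V) (C : Set (Finset V)) : Prop :=
  (∀ c ∈ C, IsMaximalClique G c) ∧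
    ∀ u v : V, G.Adj u v → ∃! c, c ∈ C ∧ u ∈ c ∧ v ∈ c

/-- `G` contains an `m`-claw: an induced `K_{1,m}` subgraph. -/
def HasClaw {V : Type*} (G : SimpleGraph V) (m : ℕ) : Prop :=
  ∃ (u : V) (S : Finset V), S.card = m ∧ u ∉ S ∧ (∀ v ∈ S, G.Adj u v) ∧
    ∀ v ∈ S, ∀ w ∈ S, v ≠ w → ¬ G.Adj v w

set_option linter.unusedSectionVars false
set_option maxHeartbeats 1000000

section GodsilAux
open Polynomial Matrix

variable {V : Type*} [Fintype V] [DecidableEq V] {G : SimpleGraph V} [DecidableRel G.Adj]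

lemma godsil_dist_two (hc : G.Connected) {u v w : V} (huv : ¬ G.Adj u v) (hne : u ≠ v)
    (h1 : G.Adj u w) (h2 : G.Adj w v) : G.dist u v = 2 := by
  have hle : G.dist u v ≤ 2 := by
    simpa using SimpleGraph.dist_le
      (SimpleGraph.Walk.cons h1 (SimpleGraph.Walk.cons h2 SimpleGraph.Walk.nil))
  have h0 : G.dist u v ≠ 0 := fun h => hne ((hc.dist_eq_zero_iff).mp h)
  have h1' : G.dist u v ≠ 1 := fun h => huv (SimpleGraph.dist_eq_one_iff_adj.mp h)
  omega

lemma godsil_codeg {mu : ℕ} (hc : G.Connected)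
    (hmu : ∀ u v : V, G.dist u v = 2 → (G.neighborFinset u ∩ G.neighborFinset v).card = mu)
    {u x y : V} (hux : G.Adj u x) (huy : G.Adj u y) (hxy : ¬ G.Adj x y) (hne : x ≠ y) :
    ((G.neighborFinset x ∩ G.neighborFinset y) ∩ G.neighborFinset u).card + 1 ≤ mu := by
  have hdist : G.dist x y = 2 := godsil_dist_two hc hxy hne hux.symm huy
  have hcard := hmu x y hdist
  have hu : u ∉ (G.neighborFinset x ∩ G.neighborFinset y) ∩ G.neighborFinset u := by
    simp [SimpleGraph.mem_neighborFinset]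
  have hsub : insert u ((G.neighborFinset x ∩ G.neighborFinset y) ∩ G.neighborFinset u)
      ⊆ G.neighborFinset x ∩ G.neighborFinset y := by
    intro z hz
    rcases Finset.mem_insert.mp hz with rfl | hz
    · simp [SimpleGraph.mem_neighborFinset, hux.symm, huy.symm]
    · exact (Finset.mem_inter.mp hz).1
  calc ((G.neighborFinset x ∩ G.neighborFinset y) ∩ G.neighborFinset u).card + 1
      = (insert u ((G.neighborFinset x ∩ G.neighborFinset y) ∩ G.neighborFinset u)).card := by
        rw [Finset.card_insert_of_notMem hu]
    _ ≤ (G.neighborFinset x ∩ G.neighborFinset y).card := Finset.card_le_card hsub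
    _ = mu := hcard

lemma godsil_isHermitian : (G.adjMatrix ℝ).IsHermitian := by
  have h := SimpleGraph.isSymm_adjMatrix (α := ℝ) (G := G)
  unfold Matrix.IsHermitian
  ext i j
  simp [Matrix.conjTranspose_apply, G.adj_comm i j]

/-- action of `aeval` on an eigenvector -/
lemma godsil_aeval_mulVec {A : Matrix V V ℝ} {y : V → ℝ} {t : ℝ} (hy : A *ᵥ y = t • y)
    (r : ℝ[X]) : (Polynomial.aeval A r) *ᵥ y = r.eval t • y := by
  have hpow : ∀ n : ℕ, (A ^ n) *ᵥ y = t ^ n • y := by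
    intro n
    induction n with
    | zero => simp
    | succ n ih =>
        rw [pow_succ, ← Matrix.mulVec_mulVec, hy, Matrix.mulVec_smul, ih, smul_smul,
          pow_succ]
        ring_nf
  induction r using Polynomial.induction_on' with
  | add p q hp hq => simp [Matrix.add_mulVec, hp, hq, add_smul]
  | monomial n a =>
      rw [Polynomial.aeval_monomial, Polynomial.eval_monomial, Algebra.algebraMap_eq_smul_one,
        Matrix.smul_mul, Matrix.one_mul, Matrix.smul_mulVec, hpow, smul_smul]

lemma godsil_spectral_decomp (hA : (G.adjMatrix ℝ).IsHermitian) :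
    G.adjMatrix ℝ = (hA.eigenvectorUnitary : Matrix V V ℝ) * Matrix.diagonal hA.eigenvalues
      * star (hA.eigenvectorUnitary : Matrix V V ℝ) := by
  simpa using hA.spectral_theorem

lemma godsil_conj_helper (hA : (G.adjMatrix ℝ).IsHermitian) (M N : Matrix V V ℝ) :
    ((hA.eigenvectorUnitary : Matrix V V ℝ) * M * star (hA.eigenvectorUnitary : Matrix V V ℝ))
      * ((hA.eigenvectorUnitary : Matrix V V ℝ) * N * star (hA.eigenvectorUnitary : Matrix V V ℝ))
    = (hA.eigenvectorUnitary : Matrix V V ℝ) * (M * N)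
        * star (hA.eigenvectorUnitary : Matrix V V ℝ) := by
  have h1 : star (hA.eigenvectorUnitary : Matrix V V ℝ) * (hA.eigenvectorUnitary : Matrix V V ℝ)
      = 1 := Matrix.UnitaryGroup.star_mul_self hA.eigenvectorUnitary
  calc ((hA.eigenvectorUnitary : Matrix V V ℝ) * M * star (hA.eigenvectorUnitary : Matrix V V ℝ))
      * ((hA.eigenvectorUnitary : Matrix V V ℝ) * N * star (hA.eigenvectorUnitary : Matrix V V ℝ))
      = (hA.eigenvectorUnitary : Matrix V V ℝ) * M *
        ((star (hA.eigenvectorUnitary : Matrix V V ℝ) * (hA.eigenvectorUnitary : Matrix V V ℝ)) *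
          (N * star (hA.eigenvectorUnitary : Matrix V V ℝ))) := by
        simp only [Matrix.mul_assoc]
    _ = (hA.eigenvectorUnitary : Matrix V V ℝ) * (M * N)
        * star (hA.eigenvectorUnitary : Matrix V V ℝ) := by
        rw [h1, Matrix.one_mul]; simp only [Matrix.mul_assoc]

lemma godsil_sub_decomp (hA : (G.adjMatrix ℝ).IsHermitian) (θ : ℝ) :
    G.adjMatrix ℝ - θ • (1 : Matrix V V ℝ)
      = (hA.eigenvectorUnitary : Matrix V V ℝ)
        * Matrix.diagonal (fun i => hA.eigenvalues i - θ)
        * star (hA.eigenvectorUnitary : Matrix V V ℝ) := by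
  have h1 : (hA.eigenvectorUnitary : Matrix V V ℝ) * star (hA.eigenvectorUnitary : Matrix V V ℝ)
      = 1 := Matrix.mem_unitaryGroup_iff.mp hA.eigenvectorUnitary.2
  have hd : Matrix.diagonal (fun i => hA.eigenvalues i - θ)
      = Matrix.diagonal hA.eigenvalues - θ • (1 : Matrix V V ℝ) := by
    ext i j
    by_cases h : i = j <;>
      simp [Matrix.diagonal_apply, Matrix.one_apply, h]
  rw [hd, Matrix.mul_sub, Matrix.sub_mul, ← godsil_spectral_decomp hA]
  congr 1
  rw [Matrix.mul_smul, Matrix.smul_mul, Matrix.mul_one, h1]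

lemma godsil_aeval_prod (hA : (G.adjMatrix ℝ).IsHermitian) (S : Finset ℝ) :
    Polynomial.aeval (G.adjMatrix ℝ) (S.prod fun θ => (X : ℝ[X]) - C θ)
      = (hA.eigenvectorUnitary : Matrix V V ℝ)
        * Matrix.diagonal (fun i => S.prod fun θ => hA.eigenvalues i - θ)
        * star (hA.eigenvectorUnitary : Matrix V V ℝ) := by
  classical
  induction S using Finset.induction_on with
  | empty =>
      simp only [Finset.prod_empty, _root_.map_one, Matrix.diagonal_one, Matrix.mul_one]
      exact (Matrix.mem_unitaryGroup_iff.mp hA.eigenvectorUnitary.2).symm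
  | @insert θ S hθ ih =>
      rw [Finset.prod_insert hθ, _root_.map_mul, ih]
      have : Polynomial.aeval (G.adjMatrix ℝ) ((X : ℝ[X]) - C θ)
          = G.adjMatrix ℝ - θ • (1 : Matrix V V ℝ) := by
        rw [map_sub, Polynomial.aeval_X, Polynomial.aeval_C, Algebra.algebraMap_eq_smul_one]
      have hprod : (fun i => ∏ θ' ∈ insert θ S, (hA.eigenvalues i - θ'))
          = fun i => (hA.eigenvalues i - θ) * ∏ θ' ∈ S, (hA.eigenvalues i - θ') :=
        funext fun i => Finset.prod_insert hθ
      rw [this, godsil_sub_decomp hA θ, godsil_conj_helper hA, Matrix.diagonal_mul_diagonal,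
        hprod]

lemma godsil_aeval_vanish (hA : (G.adjMatrix ℝ).IsHermitian) :
    Polynomial.aeval (G.adjMatrix ℝ)
      ((Finset.univ.image hA.eigenvalues).prod fun θ => (X : ℝ[X]) - C θ) = 0 := by
  rw [godsil_aeval_prod hA]
  have : (fun i => (Finset.univ.image hA.eigenvalues).prod fun θ => hA.eigenvalues i - θ)
      = fun _ => (0 : ℝ) := by
    funext i
    exact Finset.prod_eq_zero (Finset.mem_image_of_mem _ (Finset.mem_univ i)) (by ring)
  rw [this]
  simp

lemma godsil_s_mem {s : ℝ} (hs : IsAdjEigenvalue G s) :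
    s ∈ Finset.univ.image (godsil_isHermitian (G := G)).eigenvalues := by
  obtain ⟨x, hx0, hx⟩ := hs
  have hv := godsil_aeval_vanish (godsil_isHermitian (G := G))
  have h2 := godsil_aeval_mulVec hx
    ((Finset.univ.image (godsil_isHermitian (G := G)).eigenvalues).prod fun θ => (X : ℝ[X]) - C θ)
  rw [hv] at h2
  have h3 : Polynomial.eval s ((Finset.univ.image
      (godsil_isHermitian (G := G)).eigenvalues).prod fun θ => (X : ℝ[X]) - C θ) = 0 := by
    by_contra h
    exact hx0 (by
      rw [Matrix.zero_mulVec] at h2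
      rcases smul_eq_zero.mp h2.symm with h' | h'
      · exact absurd h' h
      · exact h')
  rw [Polynomial.eval_prod] at h3
  obtain ⟨θ, hθmem, hθ⟩ := Finset.prod_eq_zero_iff.mp h3
  simp only [Polynomial.eval_sub, Polynomial.eval_X, Polynomial.eval_C, sub_eq_zero] at hθ
  rwa [hθ]

lemma godsil_s_nonpos {s : ℝ} (hs : IsAdjEigenvalue G s)
    (hmin : ∀ θ : ℝ, IsAdjEigenvalue G θ → s ≤ θ) : s ≤ 0 := by
  obtain ⟨x, hx0, hx⟩ := hs
  obtain ⟨v₀, hv₀⟩ := Function.ne_iff.mp hx0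
  have hA := godsil_isHermitian (G := G)
  have htr : ∑ i, hA.eigenvalues i = 0 := by
    have h0 : Matrix.trace (G.adjMatrix ℝ) = 0 := SimpleGraph.trace_adjMatrix ℝ G
    have h1 : Matrix.trace (G.adjMatrix ℝ) = ∑ i, hA.eigenvalues i := by
      calc Matrix.trace (G.adjMatrix ℝ)
          = Matrix.trace (((hA.eigenvectorUnitary : Matrix V V ℝ)
              * Matrix.diagonal hA.eigenvalues)
              * star (hA.eigenvectorUnitary : Matrix V V ℝ)) := by
            rw [← godsil_spectral_decomp hA]
        _ = Matrix.trace (star (hA.eigenvectorUnitary : Matrix V V ℝ)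
              * ((hA.eigenvectorUnitary : Matrix V V ℝ) * Matrix.diagonal hA.eigenvalues)) :=
            Matrix.trace_mul_comm _ _
        _ = Matrix.trace (Matrix.diagonal hA.eigenvalues) := by
            rw [← Matrix.mul_assoc, Matrix.UnitaryGroup.star_mul_self, Matrix.one_mul]
        _ = ∑ i, hA.eigenvalues i := Matrix.trace_diagonal _
    rw [← h1, h0]
  obtain ⟨i, hi⟩ : ∃ i, hA.eigenvalues i ≤ 0 := by
    by_contra h
    push_neg at h
    have : (0 : ℝ) < ∑ i, hA.eigenvalues i :=
      Finset.sum_pos (fun i _ => h i) ⟨v₀, Finset.mem_univ v₀⟩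
    rw [htr] at this
    exact lt_irrefl 0 this
  refine le_trans (hmin _ ?_) hi
  refine ⟨(hA.eigenvectorBasis i : V → ℝ), ?_, hA.mulVec_eigenvectorBasis i⟩
  intro h0
  apply hA.eigenvectorBasis.orthonormal.ne_zero i
  apply PiLp.ext
  intro j
  exact congrFun h0 j

end GodsilAux

/-- number of walks of length `j` between vertices at distance `i` in a distance-regular
graph with parameters `b`, `c` and degree `k`. -/
noncomputable def godsilW (b c : ℕ → ℕ) (k : ℕ) : ℕ → ℕ → ℝ
  | 0 => fun i => if i = 0 then 1 else 0
  | (j+1) => fun i => (c i : ℝ) * godsilW b c k j (i-1)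
      + ((k : ℝ) - c i - b i) * godsilW b c k j i
      + (b i : ℝ) * godsilW b c k j (i+1)

section GodsilWalk
open Polynomial Matrix

variable {V : Type*} [Fintype V] [DecidableEq V] {G : SimpleGraph V} [DecidableRel G.Adj]
variable {b c : ℕ → ℕ} {k : ℕ}

lemma godsil_sumnbr (hdrg : IsDistanceRegular G b c) (hreg : G.IsRegularOfDegree k)
    (h : ℕ → ℝ) (u v : V) :
    ∑ w ∈ G.neighborFinset v, h (G.dist u w)
      = (c (G.dist u v) : ℝ) * h (G.dist u v - 1)
        + ((k : ℝ) - c (G.dist u v) - b (G.dist u v)) * h (G.dist u v)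
        + (b (G.dist u v) : ℝ) * h (G.dist u v + 1) := by
  obtain ⟨hconn, hcount⟩ := hdrg
  have hdeg : (G.neighborFinset v).card = k := by
    rw [SimpleGraph.card_neighborFinset_eq_degree]; exact hreg v
  by_cases huv : u = v
  · subst huv
    have hd0 : G.dist u u = 0 := SimpleGraph.dist_self
    obtain ⟨hb0, hc0⟩ := hcount u u 0 hd0
    rw [hd0]
    have hb0' : ((G.neighborFinset u).filter fun w => G.dist u w = 0 + 1)
        = G.neighborFinset u := by
      apply Finset.filter_true_of_mem
      intro w hw
      exact SimpleGraph.dist_eq_one_iff_adj.mpr ((G.mem_neighborFinset u w).mp hw)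
    have hc0' : ((G.neighborFinset u).filter fun w => G.dist u w = 0 - 1) = ∅ := by
      apply Finset.filter_false_of_mem
      intro w hw hcontra
      have hwu : u = w := hconn.dist_eq_zero_iff.mp hcontra
      rw [← hwu] at hw
      exact G.irrefl ((G.mem_neighborFinset u u).mp hw)
    have hb0k : b 0 = k := by rw [← hb0, hb0', hdeg]
    have hc00 : c 0 = 0 := by rw [← hc0, hc0', Finset.card_empty]
    have hlhs : ∑ w ∈ G.neighborFinset u, h (G.dist u w)
        = (k : ℝ) * h 1 := by
      rw [Finset.sum_congr rfl (fun w hw => by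
        rw [SimpleGraph.dist_eq_one_iff_adj.mpr ((G.mem_neighborFinset u w).mp hw)])]
      rw [Finset.sum_const, hdeg, nsmul_eq_mul]
    rw [hlhs, hb0k, hc00]
    push_cast
    ring
  · have hi : 1 ≤ G.dist u v := hconn.pos_dist_of_ne huv
    obtain ⟨hbi, hci⟩ := hcount u v (G.dist u v) rfl
    set i := G.dist u v with hidef
    set F : ℕ → Finset V := fun d => (G.neighborFinset v).filter fun w => G.dist u w = d
      with hF
    have hmemdist : ∀ w ∈ G.neighborFinset v,
        G.dist u w = i - 1 ∨ G.dist u w = i ∨ G.dist u w = i + 1 := by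
      intro w hw
      have hadj : G.Adj v w := (G.mem_neighborFinset v w).mp hw
      have hvw : G.dist v w = 1 := SimpleGraph.dist_eq_one_iff_adj.mpr hadj
      have hwv : G.dist w v = 1 := SimpleGraph.dist_eq_one_iff_adj.mpr hadj.symm
      have h1 : G.dist u w ≤ G.dist u v + G.dist v w := hconn.dist_triangle
      have h2 : G.dist u v ≤ G.dist u w + G.dist w v := hconn.dist_triangle
      rw [hvw] at h1
      rw [hwv] at h2
      omega
    have hsplit : G.neighborFinset v = (F (i-1) ∪ F i) ∪ F (i+1) := by
      ext w
      simp only [hF, Finset.mem_union, Finset.mem_filter]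
      constructor
      · intro hw
        rcases hmemdist w hw with hd | hd | hd
        · exact Or.inl (Or.inl ⟨hw, hd⟩)
        · exact Or.inl (Or.inr ⟨hw, hd⟩)
        · exact Or.inr ⟨hw, hd⟩
      · rintro ((⟨hw, _⟩ | ⟨hw, _⟩) | ⟨hw, _⟩) <;> exact hw
    have hd1 : Disjoint (F (i-1)) (F i) := by
      rw [Finset.disjoint_left]
      intro w hw1 hw2
      simp only [hF, Finset.mem_filter] at hw1 hw2
      omega
    have hd2 : Disjoint (F (i-1) ∪ F i) (F (i+1)) := by
      rw [Finset.disjoint_left]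
      intro w hw1 hw2
      simp only [hF, Finset.mem_union, Finset.mem_filter] at hw1 hw2
      rcases hw1 with hd | hd <;> omega
    have hsum : ∀ d : ℕ, ∑ w ∈ F d, h (G.dist u w) = ((F d).card : ℝ) * h d := by
      intro d
      rw [Finset.sum_congr rfl (fun w hw => by
        simp only [hF, Finset.mem_filter] at hw
        rw [hw.2])]
      rw [Finset.sum_const, nsmul_eq_mul]
    have hcards : (F (i-1)).card + (F i).card + (F (i+1)).card = k := by
      have hcc : ((F (i-1) ∪ F i) ∪ F (i+1)).card = k := by
        rw [← hsplit]; exact hdeg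
      rw [Finset.card_union_of_disjoint hd2, Finset.card_union_of_disjoint hd1] at hcc
      omega
    have hFi : ((F i).card : ℝ) = (k : ℝ) - c i - b i := by
      rw [hbi, hci] at hcards
      have : (((c i) + (F i).card + (b i) : ℕ) : ℝ) = (k : ℝ) := by rw [hcards]
      push_cast at this
      linarith
    calc ∑ w ∈ G.neighborFinset v, h (G.dist u w)
        = ∑ w ∈ (F (i-1) ∪ F i) ∪ F (i+1), h (G.dist u w) := by rw [← hsplit]
      _ = (∑ w ∈ F (i-1), h (G.dist u w) + ∑ w ∈ F i, h (G.dist u w))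
            + ∑ w ∈ F (i+1), h (G.dist u w) := by
          rw [Finset.sum_union hd2, Finset.sum_union hd1]
      _ = _ := by rw [hsum, hsum, hsum, hci, hbi, hFi]; try ring

lemma godsil_walk (hdrg : IsDistanceRegular G b c) (hreg : G.IsRegularOfDegree k) :
    ∀ (j : ℕ) (u v : V), ((G.adjMatrix ℝ) ^ j) u v = godsilW b c k j (G.dist u v) := by
  intro j
  induction j with
  | zero =>
      intro u v
      rcases eq_or_ne u v with rfl | hne
      · simp [godsilW, Matrix.one_apply, SimpleGraph.dist_self]
      · have : G.dist u v ≠ 0 := fun hd => hne (hdrg.1.dist_eq_zero_iff.mp hd)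
        simp [godsilW, Matrix.one_apply, hne, this]
  | succ j ih =>
      intro u v
      have hmul : ((G.adjMatrix ℝ) ^ (j+1)) u v
          = ∑ w ∈ G.neighborFinset v, ((G.adjMatrix ℝ) ^ j) u w := by
        rw [pow_succ, Matrix.mul_apply]
        rw [show ∑ w, ((G.adjMatrix ℝ) ^ j) u w * (G.adjMatrix ℝ) w v
            = ∑ w, (if w ∈ G.neighborFinset v then ((G.adjMatrix ℝ) ^ j) u w else 0) from
          Finset.sum_congr rfl fun w _ => by
            by_cases hadj : G.Adj v w
            · simp [SimpleGraph.adjMatrix_apply, hadj, hadj.symm,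
                SimpleGraph.mem_neighborFinset]
            · have hwv : ¬ G.Adj w v := fun hc => hadj hc.symm
              simp [SimpleGraph.adjMatrix_apply, hwv, hadj, SimpleGraph.mem_neighborFinset]]
        rw [Finset.sum_ite_mem, Finset.univ_inter]
      rw [hmul]
      rw [Finset.sum_congr rfl (fun w _ => ih u w)]
      rw [godsil_sumnbr ⟨hdrg.1, hdrg.2⟩ hreg (godsilW b c k j) u v]
      rfl

end GodsilWalk

section GodsilDelsarte
open Polynomial Matrix

variable {V : Type*} [Fintype V] [DecidableEq V] {G : SimpleGraph V} [DecidableRel G.Adj]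
variable {b c : ℕ → ℕ} {k : ℕ} {s : ℝ}

/-- The Delsarte clique bound. -/
lemma godsil_delsarte (hdrg : IsDistanceRegular G b c) (hreg : G.IsRegularOfDegree k)
    (hs : IsAdjEigenvalue G s) (hk : 1 ≤ k) :
    ∀ K : Finset V, G.IsClique (K : Set V) → K.Nonempty →
      0 ≤ (k : ℝ) + ((K.card : ℝ) - 1) * s := by
  have hA := godsil_isHermitian (G := G)
  set A := G.adjMatrix ℝ with hAdef
  set T : Finset ℝ := Finset.univ.image hA.eigenvalues with hT
  have hsT : s ∈ T := godsil_s_mem hs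
  set Q : ℝ[X] := (T.erase s).prod (fun θ => (X : ℝ[X]) - C θ) with hQ
  set π : ℝ := Q.eval s with hπdef
  have hπ : π ≠ 0 := by
    rw [hπdef, hQ, Polynomial.eval_prod]
    apply Finset.prod_ne_zero_iff.mpr
    intro θ hθ
    simp only [Polynomial.eval_sub, Polynomial.eval_X, Polynomial.eval_C]
    exact sub_ne_zero.mpr (Finset.ne_of_mem_erase hθ).symm
  set p : ℝ[X] := C π⁻¹ * Q with hp
  set E : Matrix V V ℝ := Polynomial.aeval A p with hE
  have hPfact : Q * ((X : ℝ[X]) - C s) = T.prod (fun θ => (X : ℝ[X]) - C θ) :=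
    Finset.prod_erase_mul T _ hsT
  have hvanish : Polynomial.aeval A (T.prod (fun θ => (X : ℝ[X]) - C θ)) = 0 :=
    godsil_aeval_vanish hA
  have hps : Polynomial.eval s p = 1 := by
    rw [hp, Polynomial.eval_mul, Polynomial.eval_C, ← hπdef]
    exact inv_mul_cancel₀ hπ
  have hidem : E * E = E := by
    have hroot : (p - 1).IsRoot s := by
      simp [Polynomial.IsRoot, hps]
    obtain ⟨R, hR⟩ := Polynomial.dvd_iff_isRoot.mpr hroot
    have key : p * p - p = (C π⁻¹ * R) * (T.prod (fun θ => (X : ℝ[X]) - C θ)) := by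
      rw [← hPfact]
      have h1 : p * p - p = p * (p - 1) := by ring
      rw [h1, hR, hp]
      ring
    have h2 := congrArg (Polynomial.aeval A) key
    rw [map_sub, _root_.map_mul (Polynomial.aeval A) p p,
      _root_.map_mul (Polynomial.aeval A) (C π⁻¹ * R) (T.prod fun θ => (X : ℝ[X]) - C θ),
      hvanish, mul_zero] at h2
    exact sub_eq_zero.mp h2
  have hAE : A * E = s • E := by
    have key : (X : ℝ[X]) * p - C s * p = C π⁻¹ * (T.prod fun θ => (X : ℝ[X]) - C θ) := by
      rw [← hPfact, hp]; ring
    have h2 := congrArg (Polynomial.aeval A) key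
    rw [map_sub, _root_.map_mul (Polynomial.aeval A) (X : ℝ[X]) p,
      _root_.map_mul (Polynomial.aeval A) (C s) p,
      _root_.map_mul (Polynomial.aeval A) (C π⁻¹) (T.prod fun θ => (X : ℝ[X]) - C θ),
      hvanish, mul_zero, Polynomial.aeval_X, Polynomial.aeval_C] at h2
    have h3 : algebraMap ℝ (Matrix V V ℝ) s * Polynomial.aeval A p = s • E := by
      rw [Algebra.algebraMap_eq_smul_one, Matrix.smul_mul, Matrix.one_mul, hE]
    rw [h3] at h2
    exact sub_eq_zero.mp h2
  obtain ⟨g, hg⟩ : ∃ g : ℕ → ℝ, ∀ u v, E u v = g (G.dist u v) := by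
    refine ⟨fun d => ∑ i ∈ Finset.range (p.natDegree + 1), p.coeff i * godsilW b c k i d, ?_⟩
    intro u v
    rw [hE, Polynomial.aeval_eq_sum_range, Matrix.sum_apply]
    apply Finset.sum_congr rfl
    intro i _
    rw [Matrix.smul_apply, godsil_walk hdrg hreg i u v, smul_eq_mul]
  have hET : Eᵀ = E := by
    ext u v
    rw [Matrix.transpose_apply, hg u v, hg v u, SimpleGraph.dist_comm]
  have hquad : ∀ x : V → ℝ, x ⬝ᵥ (E *ᵥ x) = (E *ᵥ x) ⬝ᵥ (E *ᵥ x) := by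
    intro x
    conv_lhs => rw [← hidem]
    rw [← Matrix.mulVec_mulVec, dotProduct_mulVec]
    congr 1
    rw [← Matrix.mulVec_transpose, hET]
  have hpsd : ∀ x : V → ℝ, 0 ≤ x ⬝ᵥ (E *ᵥ x) := by
    intro x
    rw [hquad x]
    exact Finset.sum_nonneg fun v _ => mul_self_nonneg _
  obtain ⟨x₀, hx₀ne, hx₀⟩ := hs
  have hEx₀ : E *ᵥ x₀ = x₀ := by
    rw [hE, godsil_aeval_mulVec hx₀ p, hps, one_smul]
  obtain ⟨v₀, hv₀⟩ := Function.ne_iff.mp hx₀ne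
  have hg0 : ∀ u : V, E u u = g 0 := fun u => by rw [hg u u, SimpleGraph.dist_self]
  have hentry : ∀ u : V, (Pi.single u 1 : V → ℝ) ⬝ᵥ (E *ᵥ (Pi.single u 1)) = E u u := by
    intro u
    rw [Matrix.mulVec_single]
    simp [dotProduct, Pi.single_apply]
  have hg0nonneg : 0 ≤ g 0 := by
    have h1 := hpsd (Pi.single v₀ 1)
    rw [hentry v₀, hg0 v₀] at h1
    exact h1
  have hg0pos : 0 < g 0 := by
    rcases lt_or_eq_of_le hg0nonneg with h | h
    · exact h
    exfalso
    have hEzero : E = 0 := by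
      ext w u
      have h1 : (Pi.single u 1 : V → ℝ) ⬝ᵥ (E *ᵥ (Pi.single u 1)) = 0 := by
        rw [hentry u, hg0 u, ← h]
      rw [hquad] at h1
      have h2 : ∀ v' : V, (E *ᵥ (Pi.single u 1 : V → ℝ)) v' = 0 := by
        intro v'
        have h3 : ∀ i ∈ Finset.univ,
            0 ≤ (E *ᵥ (Pi.single u 1 : V → ℝ)) i * (E *ᵥ (Pi.single u 1 : V → ℝ)) i :=
          fun i _ => mul_self_nonneg _
        have h4 := (Finset.sum_eq_zero_iff_of_nonneg h3).mp
          (by simpa [dotProduct] using h1) v' (Finset.mem_univ v')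
        exact mul_self_eq_zero.mp h4
      have h5 := h2 w
      simp only [Matrix.mulVec_single, mul_one] at h5
      simpa using h5
    rw [hEzero, Matrix.zero_mulVec] at hEx₀
    exact hx₀ne hEx₀.symm
  have hg1 : (k : ℝ) * g 1 = s * g 0 := by
    have h1 : (A * E) v₀ v₀ = ∑ w ∈ G.neighborFinset v₀, E w v₀ := by
      rw [Matrix.mul_apply]
      rw [show ∑ w, A v₀ w * E w v₀
          = ∑ w, (if w ∈ G.neighborFinset v₀ then E w v₀ else 0) from
        Finset.sum_congr rfl fun w _ => by
          by_cases hadj : G.Adj v₀ w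
          · simp [hAdef, SimpleGraph.adjMatrix_apply, hadj, SimpleGraph.mem_neighborFinset]
          · simp [hAdef, SimpleGraph.adjMatrix_apply, hadj, SimpleGraph.mem_neighborFinset]]
      rw [Finset.sum_ite_mem, Finset.univ_inter]
    have h2 : ∑ w ∈ G.neighborFinset v₀, E w v₀ = (k : ℝ) * g 1 := by
      rw [Finset.sum_congr rfl (fun w hw => by
        have hadj : G.Adj v₀ w := (G.mem_neighborFinset v₀ w).mp hw
        rw [hg w v₀, SimpleGraph.dist_eq_one_iff_adj.mpr hadj.symm])]
      rw [Finset.sum_const, nsmul_eq_mul]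
      congr 2
      rw [SimpleGraph.card_neighborFinset_eq_degree]
      exact hreg v₀
    have h3 : (A * E) v₀ v₀ = s * g 0 := by
      rw [hAE, Matrix.smul_apply, hg0 v₀, smul_eq_mul]
    rw [h1, h2] at h3
    exact h3
  intro K hK hKne
  have hK1 : 1 ≤ K.card := Finset.card_pos.mpr hKne
  set x : V → ℝ := fun v => if v ∈ K then 1 else 0 with hx
  have hmv : ∀ u, (E *ᵥ x) u = ∑ v ∈ K, E u v := by
    intro u
    simp only [Matrix.mulVec, dotProduct, hx, mul_ite, mul_one, mul_zero]
    rw [Finset.sum_ite_mem, Finset.univ_inter]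
  have hquadK : x ⬝ᵥ (E *ᵥ x) = ∑ u ∈ K, ∑ v ∈ K, E u v := by
    have h1 : x ⬝ᵥ (E *ᵥ x) = ∑ u ∈ K, (E *ᵥ x) u := by
      simp only [dotProduct, hx, ite_mul, one_mul, zero_mul]
      rw [Finset.sum_ite_mem, Finset.univ_inter]
    rw [h1]
    exact Finset.sum_congr rfl fun u _ => hmv u
  have hinner : ∀ u ∈ K, ∑ v ∈ K, E u v = g 0 + ((K.card : ℝ) - 1) * g 1 := by
    intro u hu
    rw [← Finset.add_sum_erase K _ hu, hg0 u]
    have herase : ∀ v ∈ K.erase u, E u v = g 1 := by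
      intro v hv
      have hne : v ≠ u := Finset.ne_of_mem_erase hv
      have hadj : G.Adj u v := hK (Finset.mem_coe.mpr hu)
        (Finset.mem_coe.mpr (Finset.mem_of_mem_erase hv)) (Ne.symm hne)
      rw [hg u v, SimpleGraph.dist_eq_one_iff_adj.mpr hadj]
    rw [Finset.sum_congr rfl herase, Finset.sum_const, nsmul_eq_mul,
      Finset.card_erase_of_mem hu, Nat.cast_sub hK1, Nat.cast_one]
  have htotal : 0 ≤ (K.card : ℝ) * (g 0 + ((K.card : ℝ) - 1) * g 1) := by
    have h1 := hpsd x
    rw [hquadK, Finset.sum_congr rfl hinner, Finset.sum_const, nsmul_eq_mul] at h1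
    exact h1
  have hβpos : (0 : ℝ) < (K.card : ℝ) := by exact_mod_cast hK1
  have hfac : 0 ≤ g 0 + ((K.card : ℝ) - 1) * g 1 := by
    by_contra hneg
    push_neg at hneg
    exact absurd htotal (not_le.mpr (mul_neg_of_pos_of_neg hβpos hneg))
  have hkfac : 0 ≤ (k : ℝ) * (g 0 + ((K.card : ℝ) - 1) * g 1) :=
    mul_nonneg (by positivity) hfac
  have he : (k : ℝ) * (g 0 + ((K.card : ℝ) - 1) * g 1)
      = ((k : ℝ) + ((K.card : ℝ) - 1) * s) * g 0 := by
    linear_combination ((K.card : ℝ) - 1) * hg1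
  rw [he] at hkfac
  by_contra hneg
  push_neg at hneg
  exact absurd hkfac (not_le.mpr (mul_neg_of_neg_of_pos hneg hg0pos))

end GodsilDelsarte

section GodsilStrip

variable {V : Type*} [Fintype V] [DecidableEq V] {G : SimpleGraph V} [DecidableRel G.Adj]

/-- Partitioning a neighborhood-like set into at most `t` cliques by repeatedly stripping
maximal cliques. -/
lemma godsil_strip (u : V) (e : ℝ) (he0 : 0 ≤ e)
    (hcd : ∀ x y : V, x ∈ G.neighborFinset u → y ∈ G.neighborFinset u → x ≠ y → ¬ G.Adj x y →
      (((G.neighborFinset x ∩ G.neighborFinset y) ∩ G.neighborFinset u).card : ℝ) ≤ e)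
    {lam m : ℕ} (hineq : (2 * (m : ℝ) - 1) * e < (lam : ℝ) + 1) :
    ∀ t : ℕ, t ≤ m → ∀ W : Finset V, W ⊆ G.neighborFinset u →
      (∀ v ∈ W, (lam : ℝ) ≤ ((G.neighborFinset v ∩ W).card : ℝ) + ((m : ℝ) - t) * e) →
      (∀ S : Finset V, S ⊆ W → (∀ a ∈ S, ∀ b ∈ S, a ≠ b → ¬ G.Adj a b) → S.card ≤ t) →
      ∃ P : Finset (Finset V),
        (∀ X ∈ P, X ⊆ W ∧ G.IsClique (X : Set V)) ∧ P.card ≤ t ∧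
        (∀ v ∈ W, ∃! X, X ∈ P ∧ v ∈ X) := by
  classical
  intro t
  induction t with
  | zero =>
      intro _ W _ _ halpha
      refine ⟨∅, by simp, by simp, fun v hv => absurd (halpha {v} ?_ ?_) (by simp)⟩
      · simpa using hv
      · intro a ha b hb hab
        simp only [Finset.mem_singleton] at ha hb
        exact absurd (ha.trans hb.symm) hab
  | succ t ih =>
      intro ht1 W hWsub hdeg halpha
      rcases Finset.eq_empty_or_nonempty W with rfl | ⟨w₀, hw₀⟩
      · exact ⟨∅, by simp, by simp, fun v hv => by simp at hv⟩
      -- a maximum independent subset of W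
      set 𝒮 : Finset (Finset V) :=
        W.powerset.filter (fun S => ∀ a ∈ S, ∀ b ∈ S, a ≠ b → ¬ G.Adj a b) with h𝒮
      have h𝒮ne : ({w₀} : Finset V) ∈ 𝒮 := by
        simp only [h𝒮, Finset.mem_filter, Finset.mem_powerset]
        refine ⟨by simpa using hw₀, ?_⟩
        intro a ha b hb hab
        simp only [Finset.mem_singleton] at ha hb
        exact absurd (ha.trans hb.symm) hab
      obtain ⟨S₀, hS₀mem, hS₀max⟩ := Finset.exists_max_image 𝒮 Finset.card ⟨_, h𝒮ne⟩
      have hS₀W : S₀ ⊆ W := Finset.mem_powerset.mp (Finset.mem_filter.mp hS₀mem).1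
      have hS₀ind : ∀ a ∈ S₀, ∀ b ∈ S₀, a ≠ b → ¬ G.Adj a b :=
        (Finset.mem_filter.mp hS₀mem).2
      have hS₀card1 : 1 ≤ S₀.card := by
        have := hS₀max _ h𝒮ne
        simpa using this
      have hS₀cardt : S₀.card ≤ t + 1 := halpha S₀ hS₀W hS₀ind
      obtain ⟨s₀, hs₀⟩ := Finset.card_pos.mp hS₀card1
      have hs₀W : s₀ ∈ W := hS₀W hs₀
      set B : Finset V := (G.neighborFinset s₀ ∩ W).filter
        (fun w => ∀ s' ∈ S₀.erase s₀, ¬ G.Adj w s') with hB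
      have hBW : B ⊆ W := fun w hw =>
        (Finset.mem_inter.mp (Finset.mem_filter.mp hw).1).2
      have hBN : ∀ w ∈ B, G.Adj s₀ w := fun w hw =>
        (G.mem_neighborFinset s₀ w).mp (Finset.mem_inter.mp (Finset.mem_filter.mp hw).1).1
      have hBnoS : ∀ w ∈ B, ∀ s' ∈ S₀.erase s₀, ¬ G.Adj w s' := fun w hw =>
        (Finset.mem_filter.mp hw).2
      have hs₀B : s₀ ∉ B := fun h => G.irrefl (hBN s₀ h)
      -- `insert s₀ B` is a clique
      have hBclique : G.IsClique ((insert s₀ B : Finset V) : Set V) := by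
        intro a ha b hb hab
        simp only [Finset.coe_insert, Set.mem_insert_iff, Finset.mem_coe] at ha hb
        rcases ha with rfl | haB
        · rcases hb with rfl | hbB
          · exact absurd rfl hab
          · exact hBN b hbB
        · rcases hb with rfl | hbB
          · exact (hBN a haB).symm
          · -- a, b ∈ B distinct; suppose not adjacent
            by_contra hnadj
            have haS₀ : a ∉ S₀ := by
              intro haS
              have hne : a ≠ s₀ := fun h => G.irrefl (h ▸ hBN a haB)
              exact hS₀ind a haS s₀ hs₀ hne ((hBN a haB).symm)
            have hbS₀ : b ∉ S₀ := by
              intro hbS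
              have hne : b ≠ s₀ := fun h => G.irrefl (h ▸ hBN b hbB)
              exact hS₀ind b hbS s₀ hs₀ hne ((hBN b hbB).symm)
            set S₁ : Finset V := insert a (insert b (S₀.erase s₀)) with hS₁
            have haber : a ∉ insert b (S₀.erase s₀) := by
              simp only [Finset.mem_insert]
              rintro (rfl | ha')
              · exact hab rfl
              · exact haS₀ (Finset.mem_of_mem_erase ha')
            have hber : b ∉ S₀.erase s₀ := fun h => hbS₀ (Finset.mem_of_mem_erase h)
            have hS₁card : S₁.card = S₀.card + 1 := by
              rw [hS₁, Finset.card_insert_of_notMem haber,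
                Finset.card_insert_of_notMem hber, Finset.card_erase_of_mem hs₀]
              omega
            have hS₁mem : S₁ ∈ 𝒮 := by
              simp only [h𝒮, Finset.mem_filter, Finset.mem_powerset]
              constructor
              · intro z hz
                simp only [hS₁, Finset.mem_insert] at hz
                rcases hz with rfl | rfl | hz
                · exact hBW haB
                · exact hBW hbB
                · exact hS₀W (Finset.mem_of_mem_erase hz)
              · intro z hz z' hz' hzz'
                simp only [hS₁, Finset.mem_insert] at hz hz'
                rcases hz with rfl | rfl | hz <;> rcases hz' with rfl | rfl | hz'
                · exact absurd rfl hzz'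
                · exact hnadj
                · exact hBnoS z haB _ hz'
                · exact fun h => hnadj (h.symm)
                · exact absurd rfl hzz'
                · exact hBnoS z hbB _ hz'
                · exact fun h => (hBnoS z' haB _ hz) h.symm
                · exact fun h => (hBnoS z' hbB _ hz) h.symm
                · exact hS₀ind z (Finset.mem_of_mem_erase hz) z'
                    (Finset.mem_of_mem_erase hz') hzz'
            have := hS₀max _ hS₁mem
            omega
      -- pick a maximum-cardinality clique of `W` containing `insert s₀ B`
      set 𝒞 : Finset (Finset V) :=
        W.powerset.filter (fun Y => G.IsClique (Y : Set V) ∧ insert s₀ B ⊆ Y) with h𝒞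
      have h𝒞ne : insert s₀ B ∈ 𝒞 := by
        simp only [h𝒞, Finset.mem_filter, Finset.mem_powerset]
        exact ⟨Finset.insert_subset hs₀W hBW, hBclique, le_refl _⟩
      obtain ⟨Cl, hClmem, hClmax⟩ := Finset.exists_max_image 𝒞 Finset.card ⟨_, h𝒞ne⟩
      have hClW : Cl ⊆ W := Finset.mem_powerset.mp (Finset.mem_filter.mp hClmem).1
      have hClclique : G.IsClique (Cl : Set V) := (Finset.mem_filter.mp hClmem).2.1
      have hClB : insert s₀ B ⊆ Cl := (Finset.mem_filter.mp hClmem).2.2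
      -- every vertex of `W` outside `Cl` has a non-neighbor in `Cl`
      have hwitness : ∀ w ∈ W, w ∉ Cl → ∃ z ∈ Cl, ¬ G.Adj w z := by
        intro w hwW hwCl
        by_contra hno
        push_neg at hno
        have hmem : insert w Cl ∈ 𝒞 := by
          simp only [h𝒞, Finset.mem_filter, Finset.mem_powerset]
          refine ⟨Finset.insert_subset hwW hClW, ?_, hClB.trans (Finset.subset_insert _ _)⟩
          intro x hx y hy hxy
          simp only [Finset.coe_insert, Set.mem_insert_iff, Finset.mem_coe] at hx hy
          rcases hx with rfl | hx
          · rcases hy with rfl | hy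
            · exact absurd rfl hxy
            · exact hno y hy
          · rcases hy with rfl | hy
            · exact (hno x hx).symm
            · exact hClclique hx hy hxy
        have := hClmax _ hmem
        rw [Finset.card_insert_of_notMem hwCl] at this
        omega
      have hcross : ∀ w ∈ W, w ∉ Cl → ((G.neighborFinset w ∩ Cl).card : ℝ) ≤ e := by
        intro w hwW hwCl
        obtain ⟨z, hzCl, hnadj⟩ := hwitness w hwW hwCl
        have hzW : z ∈ W := hClW hzCl
        have hzne : w ≠ z := fun h => hwCl (h ▸ hzCl)
        have hsub : G.neighborFinset w ∩ Cl
            ⊆ (G.neighborFinset w ∩ G.neighborFinset z) ∩ G.neighborFinset u := by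
          intro y hy
          obtain ⟨hyN, hyCl⟩ := Finset.mem_inter.mp hy
          have hyz : y ≠ z := by
            rintro rfl
            exact hnadj ((G.mem_neighborFinset w y).mp hyN)
          refine Finset.mem_inter.mpr ⟨Finset.mem_inter.mpr ⟨hyN, ?_⟩, hWsub (hClW hyCl)⟩
          exact (G.mem_neighborFinset z y).mpr (hClclique hzCl hyCl hyz.symm)
        calc ((G.neighborFinset w ∩ Cl).card : ℝ)
            ≤ (((G.neighborFinset w ∩ G.neighborFinset z) ∩ G.neighborFinset u).card : ℝ) := by
              exact_mod_cast Finset.card_le_card hsub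
          _ ≤ e := hcd w z (hWsub hwW) (hWsub hzW) hzne hnadj
      -- lower bound on the size of B
      have hBsize : (lam : ℝ) - ((m : ℝ) - 1) * e ≤ (B.card : ℝ) := by
        have hsubB : G.neighborFinset s₀ ∩ W ⊆ B ∪ (S₀.erase s₀).biUnion
            (fun s' => (G.neighborFinset s₀ ∩ G.neighborFinset s') ∩ G.neighborFinset u) := by
          intro w hw
          by_cases hwB : w ∈ B
          · exact Finset.mem_union_left _ hwB
          · refine Finset.mem_union_right _ ?_
            rw [Finset.mem_biUnion]
            have : ¬ (∀ s' ∈ S₀.erase s₀, ¬ G.Adj w s') := by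
              intro hall
              exact hwB (Finset.mem_filter.mpr ⟨hw, hall⟩)
            push_neg at this
            obtain ⟨s', hs', hadj⟩ := this
            refine ⟨s', hs', ?_⟩
            obtain ⟨hwN, hwW⟩ := Finset.mem_inter.mp hw
            exact Finset.mem_inter.mpr ⟨Finset.mem_inter.mpr
              ⟨hwN, (G.mem_neighborFinset s' w).mpr hadj.symm⟩, hWsub hwW⟩
        have hn1 : (G.neighborFinset s₀ ∩ W).card ≤ B.card + ((S₀.erase s₀).biUnion
            (fun s' => (G.neighborFinset s₀ ∩ G.neighborFinset s') ∩ G.neighborFinset u)).card :=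
          (Finset.card_le_card hsubB).trans (Finset.card_union_le _ _)
        have hn2 : (((S₀.erase s₀).biUnion
            (fun s' => (G.neighborFinset s₀ ∩ G.neighborFinset s') ∩ G.neighborFinset u)).card : ℝ)
            ≤ ((S₀.erase s₀).card : ℝ) * e := by
          calc (((S₀.erase s₀).biUnion _).card : ℝ)
              ≤ ((∑ s' ∈ S₀.erase s₀, ((G.neighborFinset s₀ ∩ G.neighborFinset s')
                  ∩ G.neighborFinset u).card : ℕ) : ℝ) := by
                exact_mod_cast Finset.card_biUnion_le
            _ = ∑ s' ∈ S₀.erase s₀, (((G.neighborFinset s₀ ∩ G.neighborFinset s')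
                  ∩ G.neighborFinset u).card : ℝ) := by push_cast; rfl
            _ ≤ ∑ s' ∈ S₀.erase s₀, e := by
                apply Finset.sum_le_sum
                intro s' hs'
                have hs'W : s' ∈ W := hS₀W (Finset.mem_of_mem_erase hs')
                have hs'ne : s₀ ≠ s' := (Finset.ne_of_mem_erase hs').symm
                exact hcd s₀ s' (hWsub hs₀W) (hWsub hs'W) hs'ne
                  (hS₀ind s₀ hs₀ s' (Finset.mem_of_mem_erase hs') hs'ne)
            _ = ((S₀.erase s₀).card : ℝ) * e := by rw [Finset.sum_const, nsmul_eq_mul]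
        have hernum : ((S₀.erase s₀).card : ℝ) ≤ (t : ℝ) := by
          rw [Finset.card_erase_of_mem hs₀]
          have : S₀.card - 1 ≤ t := by omega
          exact_mod_cast this
        have hdegs₀ := hdeg s₀ hs₀W
        have hcast : ((G.neighborFinset s₀ ∩ W).card : ℝ) ≤ (B.card : ℝ)
            + (((S₀.erase s₀).biUnion (fun s' => (G.neighborFinset s₀ ∩ G.neighborFinset s')
                ∩ G.neighborFinset u)).card : ℝ) := by exact_mod_cast hn1
        have he1 : (((S₀.erase s₀).biUnion (fun s' => (G.neighborFinset s₀ ∩ G.neighborFinset s')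
                ∩ G.neighborFinset u)).card : ℝ) ≤ (t : ℝ) * e :=
          hn2.trans (mul_le_mul_of_nonneg_right hernum he0)
        push_cast at hdegs₀
        nlinarith [he0]
      have hClsize : (lam : ℝ) + 1 - ((m : ℝ) - 1) * e ≤ (Cl.card : ℝ) := by
        have h1 : B.card + 1 ≤ Cl.card := by
          have := Finset.card_le_card hClB
          rw [Finset.card_insert_of_notMem hs₀B] at this
          omega
        have : (B.card : ℝ) + 1 ≤ (Cl.card : ℝ) := by exact_mod_cast h1
        linarith
      -- the independence number of W \ Cl is at most t
      have halpha' : ∀ S : Finset V, S ⊆ W \ Cl →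
          (∀ a ∈ S, ∀ b ∈ S, a ≠ b → ¬ G.Adj a b) → S.card ≤ t := by
        intro S hSsub hSind
        by_contra hc
        push_neg at hc
        obtain ⟨S', hS'sub, hS'card⟩ := Finset.exists_subset_card_eq (n := t+1) hc
        have hS'subW : S' ⊆ W \ Cl := hS'sub.trans hSsub
        have hS'ind : ∀ a ∈ S', ∀ b ∈ S', a ≠ b → ¬ G.Adj a b :=
          fun a ha b hb => hSind a (hS'sub ha) b (hS'sub hb)
        have hrem : (Cl \ S'.biUnion (fun w => G.neighborFinset w)).Nonempty := by
          rw [← Finset.card_pos]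
          have hsubCl : Cl ⊆ (Cl \ S'.biUnion (fun w => G.neighborFinset w))
              ∪ S'.biUnion (fun w => G.neighborFinset w ∩ Cl) := by
            intro z hz
            by_cases hzB : z ∈ S'.biUnion (fun w => G.neighborFinset w)
            · refine Finset.mem_union_right _ ?_
              rw [Finset.mem_biUnion] at hzB ⊢
              obtain ⟨w, hw, hzw⟩ := hzB
              exact ⟨w, hw, Finset.mem_inter.mpr ⟨hzw, hz⟩⟩
            · exact Finset.mem_union_left _ (Finset.mem_sdiff.mpr ⟨hz, hzB⟩)
          have hn1 : Cl.card ≤ (Cl \ S'.biUnion (fun w => G.neighborFinset w)).card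
              + ∑ w ∈ S', (G.neighborFinset w ∩ Cl).card :=
            (Finset.card_le_card hsubCl).trans ((Finset.card_union_le _ _).trans
              (by gcongr; exact Finset.card_biUnion_le))
          have hn2 : (∑ w ∈ S', ((G.neighborFinset w ∩ Cl).card : ℝ)) ≤ (t + 1 : ℝ) * e := by
            calc ∑ w ∈ S', ((G.neighborFinset w ∩ Cl).card : ℝ)
                ≤ ∑ w ∈ S', e := by
                  apply Finset.sum_le_sum
                  intro w hw
                  have hw' := hS'subW hw
                  exact hcross w (Finset.mem_sdiff.mp hw').1 (Finset.mem_sdiff.mp hw').2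
              _ = (S'.card : ℝ) * e := by rw [Finset.sum_const, nsmul_eq_mul]
              _ = (t + 1 : ℝ) * e := by rw [hS'card]; push_cast; ring
          by_contra hzero
          push_neg at hzero
          have hz0 : ((Cl \ S'.biUnion (fun w => G.neighborFinset w)).card : ℝ) = 0 := by
            have : (Cl \ S'.biUnion (fun w => G.neighborFinset w)).card = 0 := by omega
            exact_mod_cast this
          have hcastn1 : (Cl.card : ℝ) ≤ ((Cl \ S'.biUnion (fun w => G.neighborFinset w)).card : ℝ)
              + ∑ w ∈ S', ((G.neighborFinset w ∩ Cl).card : ℝ) := by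
            push_cast
            exact_mod_cast hn1
          have htm : (t : ℝ) + 1 ≤ (m : ℝ) := by exact_mod_cast ht1
          nlinarith [he0]
        obtain ⟨cc, hcc⟩ := hrem
        obtain ⟨hccCl, hccB⟩ := Finset.mem_sdiff.mp hcc
        have hccS' : cc ∉ S' := fun h => (Finset.mem_sdiff.mp (hS'subW h)).2 hccCl
        have hS''mem : insert cc S' ⊆ W := by
          intro z hz
          rcases Finset.mem_insert.mp hz with rfl | hz
          · exact hClW hccCl
          · exact (Finset.mem_sdiff.mp (hS'subW hz)).1
        have hS''ind : ∀ a ∈ insert cc S', ∀ b ∈ insert cc S', a ≠ b → ¬ G.Adj a b := by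
          intro a ha b hb hab
          have hccnadj : ∀ w ∈ S', ¬ G.Adj w cc := by
            intro w hw hadj
            exact hccB (Finset.mem_biUnion.mpr ⟨w, hw,
              (G.mem_neighborFinset w cc).mpr hadj⟩)
          rcases Finset.mem_insert.mp ha with ha' | ha'
          · rcases Finset.mem_insert.mp hb with hb' | hb'
            · exact absurd (ha'.trans hb'.symm) hab
            · subst ha'
              exact fun h => (hccnadj b hb') h.symm
          · rcases Finset.mem_insert.mp hb with hb' | hb'
            · subst hb'
              exact hccnadj a ha'
            · exact hS'ind a ha' b hb' hab
        have := halpha _ hS''mem hS''ind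
        rw [Finset.card_insert_of_notMem hccS', hS'card] at this
        omega
      -- degree bound inside W \ Cl
      have hdeg' : ∀ v ∈ W \ Cl, (lam : ℝ)
          ≤ ((G.neighborFinset v ∩ (W \ Cl)).card : ℝ) + ((m : ℝ) - t) * e := by
        intro v hv
        obtain ⟨hvW, hvCl⟩ := Finset.mem_sdiff.mp hv
        have h1 : G.neighborFinset v ∩ W ⊆ (G.neighborFinset v ∩ (W \ Cl))
            ∪ (G.neighborFinset v ∩ Cl) := by
          intro z hz
          obtain ⟨hzN, hzW⟩ := Finset.mem_inter.mp hz
          by_cases hzCl : z ∈ Cl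
          · exact Finset.mem_union_right _ (Finset.mem_inter.mpr ⟨hzN, hzCl⟩)
          · exact Finset.mem_union_left _ (Finset.mem_inter.mpr
              ⟨hzN, Finset.mem_sdiff.mpr ⟨hzW, hzCl⟩⟩)
        have hn1 : (G.neighborFinset v ∩ W).card
            ≤ (G.neighborFinset v ∩ (W \ Cl)).card + (G.neighborFinset v ∩ Cl).card :=
          (Finset.card_le_card h1).trans (Finset.card_union_le _ _)
        have h2 : ((G.neighborFinset v ∩ Cl).card : ℝ) ≤ e := hcross v hvW hvCl
        have h3 := hdeg v hvW
        have hcast : ((G.neighborFinset v ∩ W).card : ℝ)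
            ≤ ((G.neighborFinset v ∩ (W \ Cl)).card : ℝ)
              + ((G.neighborFinset v ∩ Cl).card : ℝ) := by exact_mod_cast hn1
        push_cast at h3 ⊢
        linarith
      -- apply the induction hypothesis
      obtain ⟨P', hP'cl, hP'card, hP'part⟩ := ih (by omega) (W \ Cl)
        ((Finset.sdiff_subset).trans hWsub) hdeg' halpha'
      refine ⟨insert Cl P', ?_, ?_, ?_⟩
      · intro X hX
        rcases Finset.mem_insert.mp hX with rfl | hX
        · exact ⟨hClW, hClclique⟩
        · exact ⟨(hP'cl X hX).1.trans Finset.sdiff_subset, (hP'cl X hX).2⟩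
      · exact (Finset.card_insert_le _ _).trans (by omega)
      · intro v hv
        by_cases hvCl : v ∈ Cl
        · refine ⟨Cl, ⟨Finset.mem_insert_self _ _, hvCl⟩, ?_⟩
          rintro X ⟨hX, hvX⟩
          rcases Finset.mem_insert.mp hX with rfl | hX
          · rfl
          · exact (((Finset.mem_sdiff.mp ((hP'cl X hX).1 hvX)).2) hvCl).elim
        · have hv' : v ∈ W \ Cl := Finset.mem_sdiff.mpr ⟨hv, hvCl⟩
          obtain ⟨X₀, ⟨hX₀P, hvX₀⟩, huniq⟩ := hP'part v hv'
          refine ⟨X₀, ⟨Finset.mem_insert_of_mem hX₀P, hvX₀⟩, ?_⟩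
          rintro X ⟨hX, hvX⟩
          rcases Finset.mem_insert.mp hX with rfl | hX
          · exact (hvCl hvX).elim
          · exact huniq X ⟨hX, hvX⟩

end GodsilStrip

section GodsilPart

variable {V : Type*} [Fintype V] [DecidableEq V] {G : SimpleGraph V} [DecidableRel G.Adj]
variable {b c : ℕ → ℕ} {k lam mu : ℕ} {s : ℝ}

lemma godsil_q1 (hreg : G.IsRegularOfDegree k)
    (hclaw : ∀ m : ℕ, (m : ℝ) > |s| → ¬ HasClaw G m) (hk : 1 ≤ k) (u : V) : 1 ≤ |s| := by
  by_contra h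
  push_neg at h
  have hcard : 1 ≤ (G.neighborFinset u).card := by
    rw [SimpleGraph.card_neighborFinset_eq_degree, hreg u]; exact hk
  obtain ⟨v₁, hv₁⟩ := Finset.card_pos.mp hcard
  have hadj : G.Adj u v₁ := (G.mem_neighborFinset u v₁).mp hv₁
  refine hclaw 1 (by exact_mod_cast h) ⟨u, {v₁}, by simp, ?_, ?_, ?_⟩
  · simp only [Finset.mem_singleton]
    exact fun hh => G.irrefl (hh ▸ hadj)
  · intro w hw
    simp only [Finset.mem_singleton] at hw
    exact hw ▸ hadj
  · intro a ha b hb hab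
    simp only [Finset.mem_singleton] at ha hb
    exact absurd (ha.trans hb.symm) hab

lemma godsil_part (hdrg : IsDistanceRegular G b c) (hreg : G.IsRegularOfDegree k)
    (hlam : ∀ u v : V, G.Adj u v → (G.neighborFinset u ∩ G.neighborFinset v).card = lam)
    (hmu : ∀ u v : V, G.dist u v = 2 → (G.neighborFinset u ∩ G.neighborFinset v).card = mu)
    (hs : IsAdjEigenvalue G s) (hmin : ∀ θ : ℝ, IsAdjEigenvalue G θ → s ≤ θ)
    (hclaw : ∀ m : ℕ, (m : ℝ) > |s| → ¬ HasClaw G m)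
    (hineq : (lam : ℝ) + 1 > (2 * |s| - 1) * ((mu : ℝ) - 1)) (hk : 1 ≤ k) (u : V) :
    ∃ P : Finset (Finset V),
      (∀ X ∈ P, X ⊆ G.neighborFinset u ∧ G.IsClique (X : Set V)
        ∧ ((X.card : ℝ) = (k : ℝ) / |s|)) ∧
      (∀ v ∈ G.neighborFinset u, ∃! X, X ∈ P ∧ v ∈ X) ∧
      ((P.card : ℝ) = |s|) := by
  classical
  have hconn := hdrg.1
  have hq1 : 1 ≤ |s| := godsil_q1 hreg hclaw hk u
  have hq0 : (0 : ℝ) < |s| := lt_of_lt_of_le one_pos hq1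
  set m : ℕ := ⌊|s|⌋₊ with hm
  have hm1 : 1 ≤ m := Nat.le_floor (by exact_mod_cast hq1)
  have hmq : (m : ℝ) ≤ |s| := Nat.floor_le (abs_nonneg s)
  set e : ℝ := max 0 ((mu : ℝ) - 1) with he
  have he0 : 0 ≤ e := le_max_left _ _
  have hcd : ∀ x y : V, x ∈ G.neighborFinset u → y ∈ G.neighborFinset u → x ≠ y → ¬ G.Adj x y →
      (((G.neighborFinset x ∩ G.neighborFinset y) ∩ G.neighborFinset u).card : ℝ) ≤ e := by
    intro x y hx hy hxy hnadj
    have h1 := godsil_codeg hconn hmu ((G.mem_neighborFinset u x).mp hx)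
      ((G.mem_neighborFinset u y).mp hy) hnadj hxy
    have h2 : (((G.neighborFinset x ∩ G.neighborFinset y) ∩ G.neighborFinset u).card : ℝ)
        ≤ (mu : ℝ) - 1 := by
      have := h1
      push_cast
      have hcast : (((G.neighborFinset x ∩ G.neighborFinset y) ∩ G.neighborFinset u).card : ℝ) + 1
          ≤ (mu : ℝ) := by exact_mod_cast h1
      linarith
    exact h2.trans (le_max_right _ _)
  have hineq' : (2 * (m : ℝ) - 1) * e < (lam : ℝ) + 1 := by
    rcases le_or_gt ((mu : ℝ) - 1) 0 with hmu0 | hmu0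
    · rw [he, max_eq_left hmu0]
      simp only [mul_zero]
      positivity
    · rw [he, max_eq_right (le_of_lt hmu0)]
      calc (2 * (m : ℝ) - 1) * ((mu : ℝ) - 1) ≤ (2 * |s| - 1) * ((mu : ℝ) - 1) := by
            apply mul_le_mul_of_nonneg_right _ (le_of_lt hmu0)
            linarith
        _ < (lam : ℝ) + 1 := hineq
  have halpha : ∀ S : Finset V, S ⊆ G.neighborFinset u →
      (∀ a ∈ S, ∀ b ∈ S, a ≠ b → ¬ G.Adj a b) → S.card ≤ m := by
    intro S hS hind
    by_contra hc
    push_neg at hc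
    have hq : ((S.card : ℝ)) > |s| := by
      have h1 : (m : ℝ) + 1 ≤ (S.card : ℝ) := by exact_mod_cast hc
      have h2 : |s| < (m : ℝ) + 1 := Nat.lt_floor_add_one _
      linarith
    refine hclaw S.card hq ⟨u, S, rfl, ?_, ?_, hind⟩
    · intro huS
      exact G.irrefl ((G.mem_neighborFinset u u).mp (hS huS))
    · intro w hw
      exact (G.mem_neighborFinset u w).mp (hS hw)
  have hdeg : ∀ v ∈ G.neighborFinset u, (lam : ℝ)
      ≤ ((G.neighborFinset v ∩ G.neighborFinset u).card : ℝ) + ((m : ℝ) - m) * e := by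
    intro v hv
    rw [hlam v u (((G.mem_neighborFinset u v).mp hv).symm)]
    ring_nf
    exact le_refl _
  obtain ⟨P, hPcl, hPcard, hPpart⟩ := godsil_strip u e he0 hcd hineq' m le_rfl
    (G.neighborFinset u) subset_rfl hdeg halpha
  -- Delsarte bound on parts
  have hs0 : s ≤ 0 := godsil_s_nonpos hs hmin
  have habs : |s| = -s := abs_of_nonpos hs0
  have hXle : ∀ X ∈ P, (X.card : ℝ) ≤ (k : ℝ) / |s| := by
    intro X hX
    obtain ⟨hXN, hXcl⟩ := hPcl X hX
    have huX : u ∉ X := fun h => G.irrefl ((G.mem_neighborFinset u u).mp (hXN h))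
    have hclX : G.IsClique ((insert u X : Finset V) : Set V) := by
      rw [Finset.coe_insert]
      apply hXcl.insert
      intro y hy _
      exact (G.mem_neighborFinset u y).mp (hXN hy)
    have hne : (insert u X : Finset V).Nonempty := ⟨u, Finset.mem_insert_self _ _⟩
    have hdel := godsil_delsarte hdrg hreg hs hk _ hclX hne
    rw [Finset.card_insert_of_notMem huX] at hdel
    push_cast at hdel
    have hXq : (X.card : ℝ) * |s| ≤ k := by
      rw [habs]
      nlinarith [hdel]
    rw [le_div_iff₀ hq0]
    exact hXq
  -- sum of part sizes equals k
  have hsum : ∑ X ∈ P, X.card = k := by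
    have h1 : ∀ X ∈ P, X.card = ∑ v ∈ G.neighborFinset u, (if v ∈ X then 1 else 0) := by
      intro X hX
      rw [Finset.sum_ite_mem, Finset.inter_eq_right.mpr (hPcl X hX).1, Finset.card_eq_sum_ones]
    rw [Finset.sum_congr rfl h1, Finset.sum_comm]
    have h2 : ∀ v ∈ G.neighborFinset u, (∑ X ∈ P, if v ∈ X then 1 else 0) = 1 := by
      intro v hv
      obtain ⟨X₀, ⟨hX₀P, hvX₀⟩, huniq⟩ := hPpart v hv
      have hfilter : P.filter (fun X => v ∈ X) = {X₀} := by
        ext Y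
        simp only [Finset.mem_filter, Finset.mem_singleton]
        constructor
        · rintro ⟨hY, hvY⟩
          exact huniq Y ⟨hY, hvY⟩
        · rintro rfl
          exact ⟨hX₀P, hvX₀⟩
      calc (∑ X ∈ P, if v ∈ X then 1 else 0) = (P.filter (fun X => v ∈ X)).card := by
            rw [Finset.card_filter]
        _ = 1 := by rw [hfilter, Finset.card_singleton]
    rw [Finset.sum_congr rfl h2, Finset.sum_const, smul_eq_mul, mul_one,
      SimpleGraph.card_neighborFinset_eq_degree, hreg u]
  -- forcing equality
  have hrm : (P.card : ℝ) ≤ |s| := le_trans (by exact_mod_cast hPcard) hmq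
  have hksum : (k : ℝ) = ∑ X ∈ P, (X.card : ℝ) := by
    rw [← Nat.cast_sum, hsum]
  have hkle : (k : ℝ) ≤ (P.card : ℝ) * ((k : ℝ) / |s|) := by
    calc (k : ℝ) = ∑ X ∈ P, (X.card : ℝ) := hksum
      _ ≤ ∑ X ∈ P, (k : ℝ) / |s| := Finset.sum_le_sum hXle
      _ = (P.card : ℝ) * ((k : ℝ) / |s|) := by rw [Finset.sum_const, nsmul_eq_mul]
  have hk0 : (0 : ℝ) < (k : ℝ) := by exact_mod_cast hk
  have hκ : ((k : ℝ) / |s|) * |s| = (k : ℝ) := div_mul_cancel₀ _ (ne_of_gt hq0)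
  have h5 : (k : ℝ) * |s| ≤ (P.card : ℝ) * (k : ℝ) := by
    calc (k : ℝ) * |s| ≤ ((P.card : ℝ) * ((k : ℝ) / |s|)) * |s| :=
          mul_le_mul_of_nonneg_right hkle (abs_nonneg s)
      _ = (P.card : ℝ) * (k : ℝ) := by rw [mul_assoc, hκ]
  have hqler : |s| ≤ (P.card : ℝ) := by nlinarith [h5, hk0]
  have hPq : (P.card : ℝ) = |s| := le_antisymm hrm hqler
  have hXeq : ∀ X ∈ P, (X.card : ℝ) = (k : ℝ) / |s| := by
    have hzero : ∑ X ∈ P, ((k : ℝ) / |s| - (X.card : ℝ)) = 0 := by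
      rw [Finset.sum_sub_distrib, Finset.sum_const, nsmul_eq_mul, hPq, ← hksum]
      field_simp
      ring
    have hnn : ∀ X ∈ P, 0 ≤ (k : ℝ) / |s| - (X.card : ℝ) :=
      fun X hX => sub_nonneg.mpr (hXle X hX)
    intro X hX
    have := (Finset.sum_eq_zero_iff_of_nonneg hnn).mp hzero X hX
    linarith
  exact ⟨P, fun X hX => ⟨(hPcl X hX).1, (hPcl X hX).2, hXeq X hX⟩, hPpart, hPq⟩

end GodsilPart

section GodsilUniq

variable {V : Type*} [Fintype V] [DecidableEq V] {G : SimpleGraph V} [DecidableRel G.Adj]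
variable {b c : ℕ → ℕ} {k lam mu : ℕ} {s : ℝ}

lemma godsil_uniq (hdrg : IsDistanceRegular G b c) (hreg : G.IsRegularOfDegree k)
    (hlam : ∀ u v : V, G.Adj u v → (G.neighborFinset u ∩ G.neighborFinset v).card = lam)
    (hmu : ∀ u v : V, G.dist u v = 2 → (G.neighborFinset u ∩ G.neighborFinset v).card = mu)
    (hs : IsAdjEigenvalue G s) (hmin : ∀ θ : ℝ, IsAdjEigenvalue G θ → s ≤ θ)
    (hclaw : ∀ m : ℕ, (m : ℝ) > |s| → ¬ HasClaw G m)
    (hineq : (lam : ℝ) + 1 > (2 * |s| - 1) * ((mu : ℝ) - 1)) (hk : 1 ≤ k)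
    {u v : V} (huv : G.Adj u v) {cl₁ cl₂ : Finset V}
    (hcl₁ : G.IsClique (cl₁ : Set V)) (hcard₁ : (cl₁.card : ℝ) = 1 + (k : ℝ) / |s|)
    (hcl₂ : G.IsClique (cl₂ : Set V)) (hcard₂ : (cl₂.card : ℝ) = 1 + (k : ℝ) / |s|)
    (hu₁ : u ∈ cl₁) (hv₁ : v ∈ cl₁) (hu₂ : u ∈ cl₂) (hv₂ : v ∈ cl₂) :
    cl₁ = cl₂ := by
  classical
  by_contra hne
  have hconn := hdrg.1
  have hq1 : 1 ≤ |s| := godsil_q1 hreg hclaw hk u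
  have hq0 : (0 : ℝ) < |s| := by linarith
  have hk0 : (0 : ℝ) < (k : ℝ) := by exact_mod_cast hk
  have hκpos : (0 : ℝ) < (k : ℝ) / |s| := div_pos hk0 hq0
  have hκq : ((k : ℝ) / |s|) * |s| = (k : ℝ) := div_mul_cancel₀ _ (ne_of_gt hq0)
  have hdel : ∀ K : Finset V, G.IsClique (K : Set V) → K.Nonempty →
      ((K.card : ℝ) - 1) * |s| ≤ (k : ℝ) := by
    intro K h hne'
    have h1 := godsil_delsarte hdrg hreg hs hk K h hne'
    have hs0 : s ≤ 0 := godsil_s_nonpos hs hmin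
    rw [abs_of_nonpos hs0]
    nlinarith
  set T₁ := cl₁.erase u with hT₁def
  set T₂ := cl₂.erase u with hT₂def
  have hvu : v ≠ u := fun h => G.irrefl (h ▸ huv)
  have hcards : cl₁.card = cl₂.card := by
    have := hcard₁.trans hcard₂.symm
    exact_mod_cast this
  have hcl₁pos : 2 ≤ cl₁.card := by
    by_contra hlt
    push_neg at hlt
    have h1 : (cl₁.card : ℝ) ≤ 1 := by exact_mod_cast Nat.lt_succ_iff.mp hlt
    rw [hcard₁] at h1
    linarith
  have hT₁card : (T₁.card : ℝ) = (k : ℝ) / |s| := by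
    have h1 : T₁.card = cl₁.card - 1 := Finset.card_erase_of_mem hu₁
    have h2 : (T₁.card : ℝ) = (cl₁.card : ℝ) - 1 := by
      rw [h1, Nat.cast_sub (by omega)]
      norm_num
    rw [h2, hcard₁]
    ring
  have hT₁N : T₁ ⊆ G.neighborFinset u := by
    intro y hy
    have hyne : y ≠ u := Finset.ne_of_mem_erase hy
    exact (G.mem_neighborFinset u y).mpr (hcl₁ (Finset.mem_coe.mpr hu₁)
      (Finset.mem_coe.mpr (Finset.mem_of_mem_erase hy)) hyne.symm)
  have hT₂N : T₂ ⊆ G.neighborFinset u := by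
    intro y hy
    have hyne : y ≠ u := Finset.ne_of_mem_erase hy
    exact (G.mem_neighborFinset u y).mpr (hcl₂ (Finset.mem_coe.mpr hu₂)
      (Finset.mem_coe.mpr (Finset.mem_of_mem_erase hy)) hyne.symm)
  have hTne : T₁ ≠ T₂ := by
    intro h
    apply hne
    rw [← Finset.insert_erase hu₁, ← Finset.insert_erase hu₂, ← hT₁def, ← hT₂def, h]
  have hT₁₂card : T₁.card = T₂.card := by
    rw [hT₁def, hT₂def, Finset.card_erase_of_mem hu₁, Finset.card_erase_of_mem hu₂, hcards]
  have hdiff : (T₁ \ T₂).Nonempty := by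
    rw [Finset.sdiff_nonempty]
    intro hsub
    exact hTne (Finset.eq_of_subset_of_card_le hsub (le_of_eq hT₁₂card.symm))
  obtain ⟨z, hz⟩ := hdiff
  obtain ⟨hzT₁, hzT₂⟩ := Finset.mem_sdiff.mp hz
  have hz₁ : z ∈ cl₁ := Finset.mem_of_mem_erase hzT₁
  have hzu : z ≠ u := Finset.ne_of_mem_erase hzT₁
  have hzcl₂ : z ∉ cl₂ := fun h => hzT₂ (Finset.mem_erase.mpr ⟨hzu, h⟩)
  have hzNu : z ∈ G.neighborFinset u := hT₁N hzT₁
  have hwit : ∃ c' ∈ T₂, ¬ G.Adj z c' := by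
    by_contra hno
    push_neg at hno
    have hclins : G.IsClique ((insert z cl₂ : Finset V) : Set V) := by
      rw [Finset.coe_insert]
      apply hcl₂.insert
      intro y hy hyz
      rcases eq_or_ne y u with hyu | hyu
      · subst hyu
        exact ((G.mem_neighborFinset y z).mp hzNu).symm
      · exact hno y (Finset.mem_erase.mpr ⟨hyu, Finset.mem_coe.mp hy⟩)
    have hinsne : (insert z cl₂ : Finset V).Nonempty := ⟨z, Finset.mem_insert_self _ _⟩
    have h1 := hdel _ hclins hinsne
    rw [Finset.card_insert_of_notMem hzcl₂] at h1
    push_cast at h1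
    rw [hcard₂] at h1
    nlinarith
  obtain ⟨c', hc'T₂, hc'nadj⟩ := hwit
  have hc'cl₂ : c' ∈ cl₂ := Finset.mem_of_mem_erase hc'T₂
  have hzc' : z ≠ c' := fun h => hzT₂ (h ▸ hc'T₂)
  have hc'Nu : c' ∈ G.neighborFinset u := hT₂N hc'T₂
  have hTTsub : T₁ ∩ T₂ ⊆ (G.neighborFinset z ∩ G.neighborFinset c') ∩ G.neighborFinset u := by
    intro y hy
    obtain ⟨hy₁, hy₂⟩ := Finset.mem_inter.mp hy
    have hyz : y ≠ z := fun h => hzT₂ (h ▸ hy₂)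
    have hyc' : y ≠ c' := by
      rintro rfl
      exact hc'nadj (hcl₁ (Finset.mem_coe.mpr hz₁)
        (Finset.mem_coe.mpr (Finset.mem_of_mem_erase hy₁)) hyz.symm)
    refine Finset.mem_inter.mpr ⟨Finset.mem_inter.mpr ⟨?_, ?_⟩, hT₁N hy₁⟩
    · exact (G.mem_neighborFinset z y).mpr (hcl₁ (Finset.mem_coe.mpr hz₁)
        (Finset.mem_coe.mpr (Finset.mem_of_mem_erase hy₁)) hyz.symm)
    · exact (G.mem_neighborFinset c' y).mpr (hcl₂ (Finset.mem_coe.mpr hc'cl₂)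
        (Finset.mem_coe.mpr (Finset.mem_of_mem_erase hy₂)) hyc'.symm)
  have hTT : ((T₁ ∩ T₂).card : ℝ) ≤ (mu : ℝ) - 1 := by
    have h1 := godsil_codeg hconn hmu ((G.mem_neighborFinset u z).mp hzNu)
      ((G.mem_neighborFinset u c').mp hc'Nu) hc'nadj hzc'
    have h2 : (T₁ ∩ T₂).card ≤ ((G.neighborFinset z ∩ G.neighborFinset c')
        ∩ G.neighborFinset u).card := Finset.card_le_card hTTsub
    have h3 : (T₁ ∩ T₂).card + 1 ≤ mu := by omega
    have h4 : ((T₁ ∩ T₂).card : ℝ) + 1 ≤ (mu : ℝ) := by exact_mod_cast h3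
    linarith
  have hvT₁ : v ∈ T₁ := Finset.mem_erase.mpr ⟨hvu, hv₁⟩
  have hvT₂ : v ∈ T₂ := Finset.mem_erase.mpr ⟨hvu, hv₂⟩
  -- lower bound for lam
  have hlow : 2 * ((k : ℝ) / |s|) - 1 - ((mu : ℝ) - 1) ≤ (lam : ℝ) := by
    have hsub : (T₁.erase v) ∪ (T₂ \ T₁) ⊆ G.neighborFinset v ∩ G.neighborFinset u := by
      intro y hy
      rcases Finset.mem_union.mp hy with hy' | hy'
      · have hyv : y ≠ v := Finset.ne_of_mem_erase hy'
        have hyT₁ : y ∈ T₁ := Finset.mem_of_mem_erase hy'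
        refine Finset.mem_inter.mpr ⟨?_, hT₁N hyT₁⟩
        exact (G.mem_neighborFinset v y).mpr (hcl₁ (Finset.mem_coe.mpr hv₁)
          (Finset.mem_coe.mpr (Finset.mem_of_mem_erase hyT₁)) hyv.symm)
      · obtain ⟨hyT₂, hyT₁⟩ := Finset.mem_sdiff.mp hy'
        have hyv : y ≠ v := fun h => hyT₁ (h ▸ hvT₁)
        refine Finset.mem_inter.mpr ⟨?_, hT₂N hyT₂⟩
        exact (G.mem_neighborFinset v y).mpr (hcl₂ (Finset.mem_coe.mpr hv₂)
          (Finset.mem_coe.mpr (Finset.mem_of_mem_erase hyT₂)) hyv.symm)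
    have hdisj : Disjoint (T₁.erase v) (T₂ \ T₁) := by
      rw [Finset.disjoint_left]
      intro y hy₁ hy₂
      exact (Finset.mem_sdiff.mp hy₂).2 (Finset.mem_of_mem_erase hy₁)
    have hcardle : (T₁.erase v).card + (T₂ \ T₁).card
        ≤ (G.neighborFinset v ∩ G.neighborFinset u).card := by
      rw [← Finset.card_union_of_disjoint hdisj]
      exact Finset.card_le_card hsub
    have hlamv : (G.neighborFinset v ∩ G.neighborFinset u).card = lam := hlam v u huv.symm
    have h1 : (T₁.erase v).card = T₁.card - 1 := Finset.card_erase_of_mem hvT₁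
    have h2 : (T₂ \ T₁).card + (T₂ ∩ T₁).card = T₂.card :=
      Finset.card_sdiff_add_card_inter _ _
    have hT₁pos : 1 ≤ T₁.card := Finset.card_pos.mpr ⟨v, hvT₁⟩
    have hc1 : ((T₁.erase v).card : ℝ) = (T₁.card : ℝ) - 1 := by
      rw [h1, Nat.cast_sub hT₁pos]
      norm_num
    have hc2 : ((T₂ \ T₁).card : ℝ) = (T₂.card : ℝ) - ((T₂ ∩ T₁).card : ℝ) := by
      have := h2
      push_cast [← this]
      ring
    have hT₂card : (T₂.card : ℝ) = (k : ℝ) / |s| := by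
      rw [← hT₁₂card]; exact hT₁card
    have hTT' : ((T₂ ∩ T₁).card : ℝ) ≤ (mu : ℝ) - 1 := by
      rw [Finset.inter_comm]; exact hTT
    have hcast : ((T₁.erase v).card : ℝ) + ((T₂ \ T₁).card : ℝ) ≤ (lam : ℝ) := by
      rw [← hlamv]
      exact_mod_cast hcardle
    rw [hc1, hc2, hT₁card, hT₂card] at hcast
    linarith
  -- upper bound for lam via the clique partition at u
  obtain ⟨P, hP, hPpart, hPq⟩ := godsil_part hdrg hreg hlam hmu hs hmin hclaw hineq hk u
  have hvNu : v ∈ G.neighborFinset u := (G.mem_neighborFinset u v).mpr huv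
  obtain ⟨X₀, ⟨hX₀P, hvX₀⟩, hX₀uniq⟩ := hPpart v hvNu
  have hup : (lam : ℝ) ≤ ((k : ℝ) / |s| - 1) + (|s| - 1) * ((mu : ℝ) - 1) := by
    have hcover : G.neighborFinset v ∩ G.neighborFinset u
        ⊆ P.biUnion (fun X => G.neighborFinset v ∩ X) := by
      intro y hy
      obtain ⟨hyv, hyu⟩ := Finset.mem_inter.mp hy
      obtain ⟨X, ⟨hXP, hyX⟩, _⟩ := hPpart y hyu
      exact Finset.mem_biUnion.mpr ⟨X, hXP, Finset.mem_inter.mpr ⟨hyv, hyX⟩⟩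
    have hn1 : (G.neighborFinset v ∩ G.neighborFinset u).card
        ≤ ∑ X ∈ P, (G.neighborFinset v ∩ X).card :=
      (Finset.card_le_card hcover).trans Finset.card_biUnion_le
    have hsplit : ∑ X ∈ P, ((G.neighborFinset v ∩ X).card : ℝ)
        = ((G.neighborFinset v ∩ X₀).card : ℝ)
          + ∑ X ∈ P.erase X₀, ((G.neighborFinset v ∩ X).card : ℝ) :=
      (Finset.add_sum_erase P _ hX₀P).symm
    have hb1 : ((G.neighborFinset v ∩ X₀).card : ℝ) ≤ (k : ℝ) / |s| - 1 := by
      have hsub1 : G.neighborFinset v ∩ X₀ ⊆ X₀.erase v := by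
        intro y hy
        obtain ⟨hyv, hyX⟩ := Finset.mem_inter.mp hy
        refine Finset.mem_erase.mpr ⟨?_, hyX⟩
        intro h
        exact G.irrefl (h ▸ (G.mem_neighborFinset v y).mp hyv)
      have h1 : (X₀.erase v).card = X₀.card - 1 := Finset.card_erase_of_mem hvX₀
      have hX₀pos : 1 ≤ X₀.card := Finset.card_pos.mpr ⟨v, hvX₀⟩
      have h2 : ((G.neighborFinset v ∩ X₀).card : ℝ) ≤ (X₀.card : ℝ) - 1 := by
        have h3 := Finset.card_le_card hsub1
        rw [h1] at h3
        have h4 : ((G.neighborFinset v ∩ X₀).card : ℝ) ≤ ((X₀.card - 1 : ℕ) : ℝ) := by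
          exact_mod_cast h3
        rwa [Nat.cast_sub hX₀pos, Nat.cast_one] at h4
      rw [(hP X₀ hX₀P).2.2] at h2
      exact h2
    have hb2 : ∀ X ∈ P.erase X₀, ((G.neighborFinset v ∩ X).card : ℝ) ≤ (mu : ℝ) - 1 := by
      intro X hXer
      have hXP : X ∈ P := Finset.mem_of_mem_erase hXer
      have hXne : X ≠ X₀ := Finset.ne_of_mem_erase hXer
      obtain ⟨hXN, hXcl, hXcard⟩ := hP X hXP
      have hvX : v ∉ X := by
        intro h
        exact hXne (hX₀uniq X ⟨hXP, h⟩)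
      have hXnonempty : X.Nonempty := by
        rw [← Finset.card_pos]
        by_contra h
        push_neg at h
        have h0 : X.card = 0 := by omega
        rw [h0] at hXcard
        push_cast at hXcard
        linarith
      have hwit2 : ∃ c₀ ∈ X, ¬ G.Adj v c₀ := by
        by_contra hno
        push_neg at hno
        have huX : u ∉ X := fun h => G.irrefl ((G.mem_neighborFinset u u).mp (hXN h))
        have hvuX : v ∉ insert u X := by
          simp only [Finset.mem_insert]
          rintro (rfl | h)
          · exact G.irrefl huv
          · exact hvX h
        have hcliq : G.IsClique ((insert v (insert u X) : Finset V) : Set V) := by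
          rw [Finset.coe_insert]
          apply SimpleGraph.IsClique.insert
          · rw [Finset.coe_insert]
            apply SimpleGraph.IsClique.insert hXcl
            intro y hy _
            exact (G.mem_neighborFinset u y).mp (hXN (Finset.mem_coe.mp hy))
          · intro y hy hyv
            simp only [Finset.coe_insert, Set.mem_insert_iff, Finset.mem_coe] at hy
            rcases hy with rfl | hy
            · exact huv.symm
            · exact hno y hy
        have hcliqne : (insert v (insert u X) : Finset V).Nonempty :=
          ⟨v, Finset.mem_insert_self _ _⟩
        have h1 := hdel _ hcliq hcliqne
        rw [Finset.card_insert_of_notMem hvuX, Finset.card_insert_of_notMem huX] at h1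
        push_cast at h1
        rw [hXcard] at h1
        nlinarith
      obtain ⟨c₀, hc₀X, hc₀nadj⟩ := hwit2
      have hvc₀ : v ≠ c₀ := fun h => hvX (h ▸ hc₀X)
      have hsub2 : G.neighborFinset v ∩ X
          ⊆ (G.neighborFinset v ∩ G.neighborFinset c₀) ∩ G.neighborFinset u := by
        intro y hy
        obtain ⟨hyv, hyX⟩ := Finset.mem_inter.mp hy
        have hyc₀ : y ≠ c₀ := by
          rintro rfl
          exact hc₀nadj ((G.mem_neighborFinset v y).mp hyv)
        refine Finset.mem_inter.mpr ⟨Finset.mem_inter.mpr ⟨hyv, ?_⟩, hXN hyX⟩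
        exact (G.mem_neighborFinset c₀ y).mpr (hXcl (Finset.mem_coe.mpr hc₀X)
          (Finset.mem_coe.mpr hyX) hyc₀.symm)
      have h1 := godsil_codeg hconn hmu huv ((G.mem_neighborFinset u c₀).mp (hXN hc₀X))
        hc₀nadj hvc₀
      have h2 : (G.neighborFinset v ∩ X).card ≤ ((G.neighborFinset v ∩ G.neighborFinset c₀)
          ∩ G.neighborFinset u).card := Finset.card_le_card hsub2
      have h3 : (G.neighborFinset v ∩ X).card + 1 ≤ mu := by omega
      have h4 : ((G.neighborFinset v ∩ X).card : ℝ) + 1 ≤ (mu : ℝ) := by exact_mod_cast h3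
      linarith
    have hPpos : 1 ≤ P.card := Finset.card_pos.mpr ⟨X₀, hX₀P⟩
    have herasecard : ((P.erase X₀).card : ℝ) = |s| - 1 := by
      rw [Finset.card_erase_of_mem hX₀P, Nat.cast_sub hPpos, Nat.cast_one, hPq]
    have hsum2 : ∑ X ∈ P.erase X₀, ((G.neighborFinset v ∩ X).card : ℝ)
        ≤ (|s| - 1) * ((mu : ℝ) - 1) := by
      calc ∑ X ∈ P.erase X₀, ((G.neighborFinset v ∩ X).card : ℝ)
          ≤ ∑ X ∈ P.erase X₀, ((mu : ℝ) - 1) := Finset.sum_le_sum hb2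
        _ = ((P.erase X₀).card : ℝ) * ((mu : ℝ) - 1) := by
            rw [Finset.sum_const, nsmul_eq_mul]
        _ = (|s| - 1) * ((mu : ℝ) - 1) := by rw [herasecard]
    have hlamv : (G.neighborFinset v ∩ G.neighborFinset u).card = lam := hlam v u huv.symm
    have hcast : (lam : ℝ) ≤ ∑ X ∈ P, ((G.neighborFinset v ∩ X).card : ℝ) := by
      rw [← hlamv]
      push_cast
      exact_mod_cast hn1
    rw [hsplit] at hcast
    linarith
  -- final contradiction
  have hfinal1 : |s| * ((mu : ℝ) - 1) < (k : ℝ) / |s| := by nlinarith [hineq, hup]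
  have hfinal2 : (k : ℝ) / |s| ≤ |s| * ((mu : ℝ) - 1) := by nlinarith [hlow, hup]
  linarith

end GodsilUniq

/-- **Godsil's theorem**: a distance-regular graph with least eigenvalue `s`, no `m`-claws for
`m > |s|`, and `λ + 1 > (2|s| - 1)(μ - 1)` is Delsarte-geometric. -/
theorem godsil_delsarte_geometric {V : Type*} [Fintype V] [DecidableEq V] (G : SimpleGraph V)
    [DecidableRel G.Adj] (b c : ℕ → ℕ) (k lam mu : ℕ) (s : ℝ)
    (hdrg : IsDistanceRegular G b c) (hreg : G.IsRegularOfDegree k)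
    (hlam : ∀ u v : V, G.Adj u v → (G.neighborFinset u ∩ G.neighborFinset v).card = lam)
    (hmu : ∀ u v : V, G.dist u v = 2 → (G.neighborFinset u ∩ G.neighborFinset v).card = mu)
    (hs : IsAdjEigenvalue G s) (hmin : ∀ θ : ℝ, IsAdjEigenvalue G θ → s ≤ θ)
    (hclaw : ∀ m : ℕ, (m : ℝ) > |s| → ¬ HasClaw G m)
    (hineq : (lam : ℝ) + 1 > (2 * |s| - 1) * ((mu : ℝ) - 1)) :
    ∃ C : Set (Finset V), IsCliqueGeometry G C ∧
      ∀ cl ∈ C, (cl.card : ℝ) = 1 + (k : ℝ) / |s| := by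
  classical
  by_cases hk : 1 ≤ k
  · -- main case
    have hu₀ : Nonempty V := hdrg.1.nonempty
    obtain ⟨u₀⟩ := hu₀
    have hq1 : 1 ≤ |s| := godsil_q1 hreg hclaw hk u₀
    have hq0 : (0 : ℝ) < |s| := by linarith
    have hk0' : (0 : ℝ) < (k : ℝ) := by exact_mod_cast hk
    have hκpos : (0 : ℝ) < (k : ℝ) / |s| := div_pos hk0' hq0
    have hdel : ∀ K : Finset V, G.IsClique (K : Set V) → K.Nonempty →
        ((K.card : ℝ) - 1) * |s| ≤ (k : ℝ) := by
      intro K h hne'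
      have h1 := godsil_delsarte hdrg hreg hs hk K h hne'
      have hs0 : s ≤ 0 := godsil_s_nonpos hs hmin
      rw [abs_of_nonpos hs0]
      nlinarith
    refine ⟨{cl | G.IsClique (cl : Set V) ∧ (cl.card : ℝ) = 1 + (k : ℝ) / |s|},
      ⟨?_, ?_⟩, ?_⟩
    · -- all members are maximal cliques
      rintro cl ⟨hclique, hcard⟩
      refine ⟨hclique, ?_⟩
      intro d hd hsub
      have hclne : cl.Nonempty := by
        rw [← Finset.card_pos]
        by_contra h
        push_neg at h
        have h0 : cl.card = 0 := by omega
        rw [h0] at hcard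
        push_cast at hcard
        linarith
      have hdne : d.Nonempty := hclne.mono hsub
      have h1 := hdel d hd hdne
      have h2 : (d.card : ℝ) - 1 ≤ (k : ℝ) / |s| := (le_div_iff₀ hq0).mpr h1
      have h3 : (d.card : ℝ) ≤ (cl.card : ℝ) := by rw [hcard]; linarith
      have h4 : d.card ≤ cl.card := by exact_mod_cast h3
      exact Finset.eq_of_subset_of_card_le hsub h4
    · -- every edge lies in a unique member
      intro u v huv
      obtain ⟨P, hP, hPpart, hPq⟩ := godsil_part hdrg hreg hlam hmu hs hmin hclaw hineq hk u
      have hvNu : v ∈ G.neighborFinset u := (G.mem_neighborFinset u v).mpr huv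
      obtain ⟨X₀, ⟨hX₀P, hvX₀⟩, -⟩ := hPpart v hvNu
      obtain ⟨hX₀N, hX₀cl, hX₀card⟩ := hP X₀ hX₀P
      have huX₀ : u ∉ X₀ := fun h => G.irrefl ((G.mem_neighborFinset u u).mp (hX₀N h))
      have hclclique : G.IsClique ((insert u X₀ : Finset V) : Set V) := by
        rw [Finset.coe_insert]
        apply hX₀cl.insert
        intro y hy _
        exact (G.mem_neighborFinset u y).mp (hX₀N (Finset.mem_coe.mp hy))
      have hclcard : ((insert u X₀ : Finset V).card : ℝ) = 1 + (k : ℝ) / |s| := by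
        rw [Finset.card_insert_of_notMem huX₀]
        push_cast
        rw [hX₀card]
        ring
      refine ⟨insert u X₀, ⟨⟨hclclique, hclcard⟩, Finset.mem_insert_self _ _,
        Finset.mem_insert_of_mem hvX₀⟩, ?_⟩
      rintro cl' ⟨⟨hcl'q, hcl'card⟩, hucl', hvcl'⟩
      exact godsil_uniq hdrg hreg hlam hmu hs hmin hclaw hineq hk huv hcl'q hcl'card
        hclclique hclcard hucl' hvcl' (Finset.mem_insert_self _ _)
        (Finset.mem_insert_of_mem hvX₀)
    · rintro cl ⟨-, hcard⟩
      exact hcard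
  · -- degenerate case: no edges
    have hk0 : k = 0 := by omega
    refine ⟨∅, ⟨fun c hc => absurd hc (Set.notMem_empty c), ?_⟩,
      fun cl hcl => absurd hcl (Set.notMem_empty cl)⟩
    intro u v huv
    exfalso
    have h1 : v ∈ G.neighborFinset u := (G.mem_neighborFinset u v).mpr huv
    have h2 : (G.neighborFinset u).card = 0 := by
      rw [SimpleGraph.card_neighborFinset_eq_degree, hreg u, hk0]
    rw [Finset.card_eq_zero] at h2
    rw [h2] at h1
    exact absurd h1 (Finset.notMem_empty v)
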